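/- Let D be an associative unital ℂ-algebra containing elements p, E, F with E·F = F·E = 1, p·E = E·(p+1), and p·F = F·(p−1), and let x₁, x₂ ∈ ℂ. Then the Heisenberg-magnet Lax matrix T(z) = [[z−p, −(p−x₁)(p−x₂)·E],[F, z+p+1−x₁−x₂]] (a 2×2 matrix with entries in D[z]) satisfies the rational RTT relation R_rat(z−w)·T₁(z)·T₂(w) = T₂(w)·T₁(z)·R_rat(z−w), an identity of 4×4 matrices with entries in D[z,w]. -/

import Mathlib

open Matrix Polynomial

noncomputable section

/-- The permutation operator `P = ∑_{i,j} E_{ij} ⊗ E_{ji}` for `n = 2`. -/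
def permOp2 (R : Type*) [Ring R] : Matrix (Fin 2 × Fin 2) (Fin 2 × Fin 2) R :=
  Matrix.of fun x y => if x.1 = y.2 ∧ x.2 = y.1 then 1 else 0

/-- The rational R-matrix `R_rat(u) = u·Id₄ + P`. -/
def Rrat2 {R : Type*} [Ring R] (u : R) : Matrix (Fin 2 × Fin 2) (Fin 2 × Fin 2) R :=
  u • (1 : Matrix (Fin 2 × Fin 2) (Fin 2 × Fin 2) R) + permOp2 R

/-- `X₁ = X ⊗ Id₂`. -/
def kron1 {R : Type*} [Ring R] (X : Matrix (Fin 2) (Fin 2) R) :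
    Matrix (Fin 2 × Fin 2) (Fin 2 × Fin 2) R :=
  Matrix.of fun x y => X x.1 y.1 * (if x.2 = y.2 then 1 else 0)

/-- `X₂ = Id₂ ⊗ X`. -/
def kron2 {R : Type*} [Ring R] (X : Matrix (Fin 2) (Fin 2) R) :
    Matrix (Fin 2 × Fin 2) (Fin 2 × Fin 2) R :=
  Matrix.of fun x y => (if x.1 = y.1 then 1 else 0) * X x.2 y.2

/-- The embedding `D → D[z,w] = (D[z])[w]`. -/
def iota {D : Type*} [Ring D] : D →+* Polynomial (Polynomial D) :=
  (Polynomial.C : Polynomial D →+* Polynomial (Polynomial D)).comp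
    (Polynomial.C : D →+* Polynomial D)

/-!
Write `T(ζ) = ζ·1 + M` with `M = [[-p, -(p-x₁)(p-x₂)E], [F, p+1-x₁-x₂]]`. Entrywise, the
RTT relation with `R(u) = u + P` reads
`(z-w)·[T_ij(z), T_kl(w)] = T_kj(w) T_il(z) - T_kj(z) T_il(w)`.
As `z` and `w` are central, the left side is `(z-w)·[M_ij, M_kl]` and the right side is
`(z-w)·(δ_il M_kj - δ_kj M_il)`, so the relation holds as soon as the entries of `M` satisfy
the `gl₂` commutation relations. For the Heisenberg matrix these follow from `E p = (p-1) E`,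
`F p = (p+1) F` and `EF = FE = 1`; for instance
`[M₁₂, M₂₁] = (p+1-x₁)(p+1-x₂) - (p-x₁)(p-x₂) = M₂₂ - M₁₁`.
-/

section RTT

variable {R : Type*} [Ring R]

theorem kron1_mul_kron2_apply (A B : Matrix (Fin 2) (Fin 2) R) (i j k l : Fin 2) :
    (kron1 A * kron2 B) (i, k) (j, l) = A i j * B k l := by
  simp [kron1, kron2, Matrix.mul_apply, Fintype.sum_prod_type]

theorem kron2_mul_kron1_apply (A B : Matrix (Fin 2) (Fin 2) R) (i j k l : Fin 2) :
    (kron2 B * kron1 A) (i, k) (j, l) = B k l * A i j := by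
  simp [kron1, kron2, Matrix.mul_apply, Fintype.sum_prod_type]

theorem permOp2_mul_apply (X : Matrix (Fin 2 × Fin 2) (Fin 2 × Fin 2) R) (i k : Fin 2)
    (y : Fin 2 × Fin 2) : (permOp2 R * X) (i, k) y = X (k, i) y := by
  fin_cases i <;> fin_cases k <;> simp [permOp2, Matrix.mul_apply, Fintype.sum_prod_type]

theorem mul_permOp2_apply (X : Matrix (Fin 2 × Fin 2) (Fin 2 × Fin 2) R)
    (x : Fin 2 × Fin 2) (j l : Fin 2) : (X * permOp2 R) x (j, l) = X x (l, j) := by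
  fin_cases j <;> fin_cases l <;> simp [permOp2, Matrix.mul_apply, Fintype.sum_prod_type]

theorem rrat2_mul_kron1_mul_kron2_apply (u : R) (A B : Matrix (Fin 2) (Fin 2) R)
    (i j k l : Fin 2) :
    (Rrat2 u * kron1 A * kron2 B) (i, k) (j, l) = u * (A i j * B k l) + A k j * B i l := by
  rw [Matrix.mul_assoc, Rrat2, Matrix.add_mul, Matrix.add_apply, permOp2_mul_apply,
    Matrix.smul_mul, Matrix.one_mul, Matrix.smul_apply, kron1_mul_kron2_apply,
    kron1_mul_kron2_apply, smul_eq_mul]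

theorem kron2_mul_kron1_mul_rrat2_apply (u : R) (A B : Matrix (Fin 2) (Fin 2) R)
    (i j k l : Fin 2) :
    (kron2 B * kron1 A * Rrat2 u) (i, k) (j, l) = B k l * A i j * u + B k j * A i l := by
  rw [Rrat2, Matrix.mul_add, Matrix.add_apply, mul_permOp2_apply, Matrix.smul_one_eq_diagonal,
    Matrix.mul_diagonal, kron2_mul_kron1_apply, kron2_mul_kron1_apply]

/-- The entries `M j i` satisfy the commutation relations `[e_ij, e_kl] = δ_jk e_il - δ_li e_kj`
of the standard basis of `gl_n`. -/
def SatisfiesGlRelations {n : Type*} [DecidableEq n] (M : Matrix n n R) : Prop :=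
  ∀ i j k l, M i j * M k l - M k l * M i j =
    (if i = l then M k j else 0) - (if k = j then M i l else 0)

theorem commute_ite_zero {c : R} (hc : ∀ x, Commute c x) (P : Prop) [Decidable P] (x : R) :
    Commute (if P then c else 0) x := by
  split_ifs
  exacts [hc x, Commute.zero_left x]

theorem add_mul_add_sub_add_mul_add_of_commute {c d : R} (hc : ∀ t, Commute c t)
    (hd : ∀ t, Commute d t) (x y : R) :
    (c + x) * (d + y) - (d + y) * (c + x) = x * y - y * x := by
  simp only [add_mul, mul_add, (hc d).eq, (hc y).eq, (hd x).symm.eq]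
  abel

theorem rtt_scalar_add_of_satisfiesGlRelations {z w : R} (hz : ∀ x, Commute z x)
    (hw : ∀ x, Commute w x) {M : Matrix (Fin 2) (Fin 2) R} (hM : SatisfiesGlRelations M) :
    Rrat2 (z - w) * kron1 (scalar (Fin 2) z + M) * kron2 (scalar (Fin 2) w + M) =
      kron2 (scalar (Fin 2) w + M) * kron1 (scalar (Fin 2) z + M) * Rrat2 (z - w) := by
  ext ⟨i, k⟩ ⟨j, l⟩
  rw [rrat2_mul_kron1_mul_kron2_apply, kron2_mul_kron1_mul_rrat2_apply]
  simp only [Matrix.add_apply, scalar_apply, diagonal_apply]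
  have hbracket := add_mul_add_sub_add_mul_add_of_commute (commute_ite_zero hz (i = j))
    (commute_ite_zero hw (k = l)) (M i j) (M k l)
  have hexchange :
      ((if k = j then w else 0) + M k j) * ((if i = l then z else 0) + M i l) -
        ((if k = j then z else 0) + M k j) * ((if i = l then w else 0) + M i l) =
      (z - w) * ((if i = l then M k j else 0) - (if k = j then M i l else 0)) := by
    split_ifs <;>
      simp only [add_mul, mul_add, zero_add, (hz (M k j)).symm.eq, (hw (M k j)).symm.eq,
        (hz w).symm.eq] <;>
      noncomm_ring
  rw [← hM, ← hbracket, mul_sub, sub_eq_sub_iff_add_eq_add] at hexchange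
  rw [← ((hz _).sub_left (hw _)).eq]
  exact hexchange.symm.trans (add_comm _ _)

def heisenbergLaxMatrix (p e f a b : R) : Matrix (Fin 2) (Fin 2) R :=
  !![-p, -((p - a) * (p - b) * e); f, p + 1 - a - b]

theorem satisfiesGlRelations_heisenbergLaxMatrix {p e f a b : R} (ha : ∀ x, Commute a x)
    (hb : ∀ x, Commute b x) (hef : e * f = 1) (hfe : f * e = 1) (hpe : p * e = e * (p + 1))
    (hpf : p * f = f * (p - 1)) : SatisfiesGlRelations (heisenbergLaxMatrix p e f a b) := by
  have hep : e * p = p * e - e := by rw [hpe]; noncomm_ring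
  have hfp : f * p = p * f + f := by rw [hpf]; noncomm_ring
  have hfp' : ∀ t, f * (p * t) = p * (f * t) + f * t := fun t => by
    rw [← mul_assoc, hfp, add_mul, mul_assoc]
  -- Normal-order both sides: the central `a`, `b` to the left, then `p`, then `e` and `f`.
  intro i j k l
  fin_cases i <;> fin_cases j <;> fin_cases k <;> fin_cases l <;>
    simp only [heisenbergLaxMatrix, of_apply, cons_val', cons_val_zero, cons_val_one,
      cons_val_fin_one, Fin.zero_eta, Fin.mk_one, Fin.isValue, ↓reduceIte, zero_ne_one,
      one_ne_zero, mul_add, add_mul, mul_sub, sub_mul, mul_neg, neg_mul, mul_one, one_mul,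
      mul_assoc, (ha p).symm.eq, (ha e).symm.eq, (ha f).symm.eq, (hb p).symm.eq, (hb e).symm.eq,
      (hb f).symm.eq, (ha p).symm.left_comm, (ha f).symm.left_comm, (ha b).symm.left_comm,
      (hb p).symm.left_comm, (hb f).symm.left_comm, hep, hfp, hfp', hef, hfe] <;>
    abel

end RTT

theorem Polynomial.commute_C_of_forall_commute {S : Type*} [Semiring S] {a : S}
    (ha : ∀ b, Commute a b) (q : S[X]) : Commute (C a) q :=
  Polynomial.ext fun n => by simpa only [coeff_C_mul, coeff_mul_C] using (ha (q.coeff n)).eq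

/-- The Heisenberg-magnet Lax matrix `T(z) = [[z−p, −(p−x₁)(p−x₂)·E],[F, z+p+1−x₁−x₂]]` satisfies the rational
RTT relation `R_rat(z−w)·T₁(z)·T₂(w) = T₂(w)·T₁(z)·R_rat(z−w)` over `D[z,w]`. -/
theorem heisenberg_lax_rtt (D : Type*) [Ring D] [Algebra ℂ D]
    (p E F : D) (hEF : E * F = 1) (hFE : F * E = 1)
    (hpE : p * E = E * (p + 1)) (hpF : p * F = F * (p - 1)) (x₁ x₂ : ℂ) :
    let z : Polynomial (Polynomial D) := Polynomial.C Polynomial.X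
    let w : Polynomial (Polynomial D) := Polynomial.X
    let T : Polynomial (Polynomial D) → Matrix (Fin 2) (Fin 2) (Polynomial (Polynomial D)) :=
      fun ζ =>
        !![ζ - iota p,
           -((iota p - algebraMap ℂ (Polynomial (Polynomial D)) x₁) *
             (iota p - algebraMap ℂ (Polynomial (Polynomial D)) x₂) * iota E);
           iota F,
           ζ + iota p + 1 - algebraMap ℂ (Polynomial (Polynomial D)) x₁ -
             algebraMap ℂ (Polynomial (Polynomial D)) x₂]
    Rrat2 (z - w) * kron1 (T z) * kron2 (T w) =
      kron2 (T w) * kron1 (T z) * Rrat2 (z - w) := by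
  intro z w T
  set a := algebraMap ℂ (Polynomial (Polynomial D)) x₁
  set b := algebraMap ℂ (Polynomial (Polynomial D)) x₂
  have hT : ∀ ζ, T ζ =
      scalar (Fin 2) ζ + heisenbergLaxMatrix (iota p) (iota E) (iota F) a b := fun ζ => by
    ext i j : 1
    fin_cases i <;> fin_cases j <;>
      simp only [T, heisenbergLaxMatrix, Matrix.add_apply, scalar_apply, diagonal_apply, of_apply,
        cons_val', cons_val_zero, cons_val_one, cons_val_fin_one, Fin.zero_eta, Fin.mk_one,
        Fin.isValue, ↓reduceIte, zero_ne_one, one_ne_zero, zero_add] <;>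
      abel
  have hM := satisfiesGlRelations_heisenbergLaxMatrix (Algebra.commute_algebraMap_left x₁)
    (Algebra.commute_algebraMap_left x₂) (by simpa using congrArg iota hEF)
    (by simpa using congrArg iota hFE) (by simpa using congrArg iota hpE)
    (by simpa using congrArg iota hpF)
  rw [hT, hT]
  exact rtt_scalar_add_of_satisfiesGlRelations (commute_C_of_forall_commute commute_X)
    commute_X hM
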